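/- Let S, A be finite and γ ∈ (0,1). Suppose d is a probability distribution on S × A with full support whose one-step pushforward d' under (P, π) differs from d (i.e. d' ≠ d). Then B^π is NOT a γ-contraction with respect to ‖·‖_d: there exist Q, Q' : S × A → ℝ with ‖B^π Q − B^π Q'‖_d > γ ‖Q − Q'‖_d. -/

import Mathlib

/-!
Write `K` for the transition matrix on state-action pairs, so that `B^π Q - B^π Q' = γ K (Q - Q')`.
Since `K` is row-stochastic, the pushforward `d' = d K` has the same total mass as `d`; if it differs
from `d`, some pair `y` has `d y < d' y`. Perturbing the constant function in the direction of `y`,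
`h = 1 + t e_y` with `t = (d' y - d y) / d y`, gives
`‖K h‖_d² - ‖h‖_d² ≥ 2 t (d' y - d y) - t² d y = t² d y > 0`.
-/

open Finset Matrix

section RowStochastic

variable {X : Type*} [Fintype X]

theorem mulVec_one_of_row_sum {K : Matrix X X ℝ} (hK : ∀ x, ∑ y, K x y = 1) : K *ᵥ 1 = 1 := by
  ext x
  simp [mulVec, dotProduct, hK x]

theorem sum_vecMul_of_row_sum {K : Matrix X X ℝ} (hK : ∀ x, ∑ y, K x y = 1) (d : X → ℝ) :
    ∑ y, (d ᵥ* K) y = ∑ x, d x := by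
  simp only [vecMul, dotProduct]
  rw [sum_comm]
  simp [← mul_sum, hK]

theorem exists_lt_vecMul_of_ne {K : Matrix X X ℝ} (hK : ∀ x, ∑ y, K x y = 1) {d : X → ℝ}
    (hne : d ᵥ* K ≠ d) : ∃ y, d y < (d ᵥ* K) y := by
  by_contra! hle
  refine hne (funext fun y => ?_)
  exact (sum_eq_sum_iff_of_le fun y _ => hle y).1 (sum_vecMul_of_row_sum hK d) y (mem_univ y)

theorem sum_mul_one_add_smul_sq (d v : X → ℝ) (t : ℝ) :
    ∑ x, d x * (1 + t • v) x ^ 2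
      = ∑ x, d x + 2 * t * ∑ x, d x * v x + t ^ 2 * ∑ x, d x * v x ^ 2 := by
  simp only [mul_sum, ← sum_add_distrib]
  refine sum_congr rfl fun x _ => ?_
  simp only [Pi.add_apply, Pi.one_apply, Pi.smul_apply, smul_eq_mul]
  ring

theorem exists_sum_mul_sq_lt_sum_mul_mulVec_sq {K : Matrix X X ℝ} (hK : ∀ x, ∑ y, K x y = 1)
    {d : X → ℝ} (hd : ∀ x, 0 < d x) (hne : d ᵥ* K ≠ d) :
    ∃ h : X → ℝ, ∑ x, d x * h x ^ 2 < ∑ x, d x * (K *ᵥ h) x ^ 2 := by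
  classical
  obtain ⟨y, hy⟩ := exists_lt_vecMul_of_ne hK hne
  set t := ((d ᵥ* K) y - d y) / d y
  have ht : t * d y = (d ᵥ* K) y - d y := div_mul_cancel₀ _ (hd y).ne'
  have hKh : K *ᵥ (1 + t • Pi.single y 1) = 1 + t • K.col y := by
    rw [mulVec_add, mulVec_smul, mulVec_one_of_row_sum hK, mulVec_single_one]
  have hcol : ∑ x, d x * K.col y x = (d ᵥ* K) y := rfl
  have hcol_sq : 0 ≤ ∑ x, d x * K.col y x ^ 2 :=
    sum_nonneg fun x _ => mul_nonneg (hd x).le (sq_nonneg _)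
  refine ⟨1 + t • Pi.single y 1, ?_⟩
  rw [hKh, sum_mul_one_add_smul_sq, sum_mul_one_add_smul_sq, hcol]
  simp only [Pi.single_apply, mul_ite, mul_one, mul_zero, ite_pow, one_pow,
    zero_pow two_ne_zero, sum_ite_eq', mem_univ, if_true]
  have ht_pos : 0 < t := div_pos (sub_pos.2 hy) (hd y)
  nlinarith [mul_pos (pow_pos ht_pos 2) (hd y), mul_nonneg (sq_nonneg t) hcol_sq]

end RowStochastic

section MDP

variable {S A : Type*} [Fintype S] [Fintype A]

def stateActionKernel (P : S → A → S → ℝ) (π : S → A → ℝ) : Matrix (S × A) (S × A) ℝ :=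
  fun x y => P x.1 x.2 y.1 * π y.1 y.2

theorem stateActionKernel_row_sum {P : S → A → S → ℝ} {π : S → A → ℝ}
    (hPsum : ∀ s a, ∑ s', P s a s' = 1) (hπsum : ∀ s, ∑ a, π s a = 1) (x : S × A) :
    ∑ y, stateActionKernel P π x y = 1 := by
  simp [stateActionKernel, Fintype.sum_prod_type, ← mul_sum, hπsum, hPsum]

theorem stateActionKernel_mulVec_apply (P : S → A → S → ℝ) (π : S → A → ℝ) (Q : S × A → ℝ)
    (x : S × A) :
    (stateActionKernel P π *ᵥ Q) x = ∑ s', ∑ a', P x.1 x.2 s' * π s' a' * Q (s', a') := by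
  simp [mulVec, dotProduct, stateActionKernel, Fintype.sum_prod_type]

theorem vecMul_stateActionKernel (P : S → A → S → ℝ) (π : S → A → ℝ) (d : S × A → ℝ) :
    d ᵥ* stateActionKernel P π = fun y => ∑ x, d x * P x.1 x.2 y.1 * π y.1 y.2 := by
  ext y
  simp [vecMul, dotProduct, stateActionKernel, mul_assoc]

end MDP

theorem bellman_no_contraction_nonstationary_general
    {S A : Type*} [Fintype S] [Fintype A]
    (P : S → A → S → ℝ) (π : S → A → ℝ) (r : S → A → ℝ) (γ : ℝ)
    (hγ0 : 0 < γ)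
    (hPsum : ∀ s a, ∑ s', P s a s' = 1)
    (hπsum : ∀ s, ∑ a, π s a = 1)
    (d : S × A → ℝ) (hdpos : ∀ x, 0 < d x)
    (hnonstat : (fun y : S × A => ∑ x : S × A, d x * P x.1 x.2 y.1 * π y.1 y.2) ≠ d) :
    ∃ Q Q' : S × A → ℝ,
      Real.sqrt (∑ x : S × A, d x *
          ((r x.1 x.2 + γ * ∑ s', ∑ a', P x.1 x.2 s' * π s' a' * Q (s', a')) -
           (r x.1 x.2 + γ * ∑ s', ∑ a', P x.1 x.2 s' * π s' a' * Q' (s', a'))) ^ 2)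
        > γ * Real.sqrt (∑ x : S × A, d x * (Q x - Q' x) ^ 2) := by
  obtain ⟨h, hlt⟩ := exists_sum_mul_sq_lt_sum_mul_mulVec_sq
    (stateActionKernel_row_sum hPsum hπsum) hdpos
    (by rwa [vecMul_stateActionKernel])
  refine ⟨h, 0, ?_⟩
  simp only [← stateActionKernel_mulVec_apply, Pi.zero_apply, mul_zero, sum_const_zero,
    add_sub_add_left_eq_sub, sub_zero, mul_pow, mul_left_comm _ (γ ^ 2), ← mul_sum]
  rw [Real.sqrt_mul (sq_nonneg γ), Real.sqrt_sq hγ0.le]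
  exact mul_lt_mul_of_pos_left (Real.sqrt_lt_sqrt
    (sum_nonneg fun x _ => mul_nonneg (hdpos x).le (sq_nonneg _)) hlt) hγ0

/-- If a full-support distribution d is not stationary for (P, π), then the Bellman operator
B^π is not a γ-contraction with respect to the d-weighted ℓ₂ norm. -/
theorem bellman_no_contraction_nonstationary
    {S A : Type*} [Fintype S] [Fintype A]
    (P : S → A → S → ℝ) (π : S → A → ℝ) (r : S → A → ℝ) (γ : ℝ)
    (hγ0 : 0 < γ) (hγ1 : γ < 1)
    (hPnn : ∀ s a s', 0 ≤ P s a s') (hPsum : ∀ s a, ∑ s', P s a s' = 1)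
    (hπnn : ∀ s a, 0 ≤ π s a) (hπsum : ∀ s, ∑ a, π s a = 1)
    (d : S × A → ℝ) (hdpos : ∀ x, 0 < d x) (hdsum : ∑ x, d x = 1)
    (hnonstat : (fun y : S × A => ∑ x : S × A, d x * P x.1 x.2 y.1 * π y.1 y.2) ≠ d) :
    ∃ Q Q' : S × A → ℝ,
      Real.sqrt (∑ x : S × A, d x *
          ((r x.1 x.2 + γ * ∑ s', ∑ a', P x.1 x.2 s' * π s' a' * Q (s', a')) -
           (r x.1 x.2 + γ * ∑ s', ∑ a', P x.1 x.2 s' * π s' a' * Q' (s', a'))) ^ 2)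
        > γ * Real.sqrt (∑ x : S × A, d x * (Q x - Q' x) ^ 2) :=
  bellman_no_contraction_nonstationary_general P π r γ hγ0 hPsum hπsum d hdpos hnonstat
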